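/- arXiv:2603.00742 — 4 statements merged into one kernel-verified Lean document; each statement's English description precedes it below -/
import Mathlib

section
/- Suppose Σ = Σ_{k=1}^D s_k q_k r_kᵀ where {q_k} and {r_k} are orthonormal families and s_k > 0. If U, V satisfy VU = Σ_{k=1}^r s_k q_k r_kᵀ for some r ≤ D, the row space of U is contained in span{r_1,…,r_r}, and the column space of V is contained in span{q_1,…,q_r}, then (U, V) is a critical point of L(U,V) = (1/2)‖VU − Σ‖_F², i.e., Vᵀ(VU − Σ) = 0 and (VU − Σ)Uᵀ = 0. -/
/-!
The residual is `VU - Σ = -∑_{k ≥ r} s_k q_k r_kᵀ`. Every column of `V` lies in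
`span{q_k}_{k<r}`, hence is orthogonal to each `q_k` with `k ≥ r`; so `Vᵀ q_k = 0` for those `k`
and `Vᵀ (VU - Σ) = 0`. Symmetrically `U r_k = 0` for `k ≥ r` gives `(VU - Σ) Uᵀ = 0`.
-/

open Matrix

section Orthogonality

variable {R ι κ : Type*} [CommSemiring R] [Fintype ι]

lemma dotProduct_eq_zero_of_mem_span {S : Set (ι → R)} {u v : ι → R}
    (h : ∀ w ∈ S, w ⬝ᵥ u = 0) (hv : v ∈ Submodule.span R S) : v ⬝ᵥ u = 0 :=
  (Submodule.span_le (p := LinearMap.ker ((dotProductBilin R R).flip u))).2 h hv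

lemma dotProduct_eq_zero_of_mem_span_pairwise_orthogonal {q : κ → ι → R}
    (hq : Pairwise fun k l => q k ⬝ᵥ q l = 0) {p : κ → Prop} {k : κ} (hk : ¬ p k)
    {v : ι → R}
    (hv : v ∈ Submodule.span R {v | ∃ l, p l ∧ v = q l}) : v ⬝ᵥ q k = 0 := by
  refine dotProduct_eq_zero_of_mem_span ?_ hv
  rintro _ ⟨l, hl, rfl⟩
  exact hq fun hlk => hk (hlk ▸ hl)

end Orthogonality

section RankOneSums

variable {R l m n κ : Type*} [CommSemiring R]
  (s : Finset κ) (c : κ → R) (x : κ → m → R) (y : κ → n → R)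

lemma mul_sum_smul_vecMulVec_eq_zero [Fintype m] {M : Matrix l m R}
    (h : ∀ k ∈ s, M *ᵥ x k = 0) :
    M * ∑ k ∈ s, c k • vecMulVec (x k) (y k) = 0 := by
  rw [Matrix.mul_sum]
  refine Finset.sum_eq_zero fun k hk => ?_
  rw [Matrix.mul_smul, mul_vecMulVec, h k hk, zero_vecMulVec, smul_zero]

lemma sum_smul_vecMulVec_mul_transpose_eq_zero [Fintype n] {M : Matrix l n R}
    (h : ∀ k ∈ s, M *ᵥ y k = 0) :
    (∑ k ∈ s, c k • vecMulVec (x k) (y k)) * Mᵀ = 0 := by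
  rw [Matrix.sum_mul]
  refine Finset.sum_eq_zero fun k hk => ?_
  rw [Matrix.smul_mul, vecMulVec_mul, vecMul_transpose, h k hk]
  ext
  simp [vecMulVec_apply]

end RankOneSums

theorem critical_point_of_partial_svd_general (H di dout D rr : ℕ)
    (s : Fin D → ℝ)
    (q : Fin D → Fin dout → ℝ) (r : Fin D → Fin di → ℝ)
    (hq : ∀ k l, q k ⬝ᵥ q l = if k = l then (1 : ℝ) else 0)
    (hr : ∀ k l, r k ⬝ᵥ r l = if k = l then (1 : ℝ) else 0)
    (U : Matrix (Fin H) (Fin di) ℝ) (V : Matrix (Fin dout) (Fin H) ℝ)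
    (Sig : Matrix (Fin dout) (Fin di) ℝ)
    (hSig : Sig = ∑ k : Fin D, s k • vecMulVec (q k) (r k))
    (hVU : V * U = ∑ k : Fin D, if (k : ℕ) < rr then s k • vecMulVec (q k) (r k) else 0)
    (hrow : ∀ i : Fin H,
      U i ∈ Submodule.span ℝ {v : Fin di → ℝ | ∃ k : Fin D, (k : ℕ) < rr ∧ v = r k})
    (hcol : ∀ j : Fin H,
      (fun i => V i j) ∈ Submodule.span ℝ {v : Fin dout → ℝ | ∃ k : Fin D, (k : ℕ) < rr ∧ v = q k}) :
    Vᵀ * (V * U - Sig) = 0 ∧ (V * U - Sig) * Uᵀ = 0 := by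
  have hE : V * U - Sig = -∑ k ∈ Finset.univ.filter (fun k : Fin D => ¬ (k : ℕ) < rr),
      s k • vecMulVec (q k) (r k) := by
    rw [hVU, hSig, ← Finset.sum_filter,
      ← Finset.sum_filter_add_sum_filter_not Finset.univ fun k : Fin D => (k : ℕ) < rr]
    abel
  have hV (k : Fin D) (hk : ¬ (k : ℕ) < rr) : Vᵀ *ᵥ q k = 0 := funext fun j =>
    dotProduct_eq_zero_of_mem_span_pairwise_orthogonal (fun a b hab => (hq a b).trans (if_neg hab))
      (p := fun l : Fin D => (l : ℕ) < rr) hk (hcol j)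
  have hU (k : Fin D) (hk : ¬ (k : ℕ) < rr) : U *ᵥ r k = 0 := funext fun i =>
    dotProduct_eq_zero_of_mem_span_pairwise_orthogonal (fun a b hab => (hr a b).trans (if_neg hab))
      (p := fun l : Fin D => (l : ℕ) < rr) hk (hrow i)
  rw [hE, Matrix.mul_neg, Matrix.neg_mul, neg_eq_zero, neg_eq_zero]
  exact ⟨mul_sum_smul_vecMulVec_eq_zero _ _ _ _ fun k hk => hV k (Finset.mem_filter.1 hk).2,
    sum_smul_vecMulVec_mul_transpose_eq_zero _ _ _ _ fun k hk => hU k (Finset.mem_filter.1 hk).2⟩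

/-- If `Σ = Σ_{k} s_k q_k r_kᵀ` (orthonormal `q_k`, `r_k`, `s_k > 0`),
`VU = Σ_{k<r} s_k q_k r_kᵀ`, the rows of `U` lie in `span{r_k : k < r}` and the
columns of `V` lie in `span{q_k : k < r}`, then `(U,V)` is a critical point of
`L(U,V) = (1/2)‖VU − Σ‖_F²`, i.e. both gradients vanish. -/
theorem critical_point_of_partial_svd (H di dout D rr : ℕ) (hrr : rr ≤ D)
    (s : Fin D → ℝ) (hs : ∀ k, 0 < s k)
    (q : Fin D → Fin dout → ℝ) (r : Fin D → Fin di → ℝ)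
    (hq : ∀ k l, q k ⬝ᵥ q l = if k = l then (1 : ℝ) else 0)
    (hr : ∀ k l, r k ⬝ᵥ r l = if k = l then (1 : ℝ) else 0)
    (U : Matrix (Fin H) (Fin di) ℝ) (V : Matrix (Fin dout) (Fin H) ℝ)
    (Sig : Matrix (Fin dout) (Fin di) ℝ)
    (hSig : Sig = ∑ k : Fin D, s k • vecMulVec (q k) (r k))
    (hVU : V * U = ∑ k : Fin D, if (k : ℕ) < rr then s k • vecMulVec (q k) (r k) else 0)
    (hrow : ∀ i : Fin H,
      U i ∈ Submodule.span ℝ {v : Fin di → ℝ | ∃ k : Fin D, (k : ℕ) < rr ∧ v = r k})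
    (hcol : ∀ j : Fin H,
      (fun i => V i j) ∈ Submodule.span ℝ {v : Fin dout → ℝ | ∃ k : Fin D, (k : ℕ) < rr ∧ v = q k}) :
    Vᵀ * (V * U - Sig) = 0 ∧ (V * U - Sig) * Uᵀ = 0 :=
  critical_point_of_partial_svd_general H di dout D rr s q r hq hr U V Sig hSig hVU hrow hcol
end

section
/- Let σ(t) = s / (1 + (s/σ₀ − 1)e^{−2st}) with 0 < σ₀ < s. For any ε ∈ (0, s − σ₀), the time t_ε at which σ(t_ε) = s − ε equals (1/(2s))·ln((s/σ₀ − 1)·(s − ε)/ε). In particular, for fixed σ₀ and ε-level proportional to s, the learning time scales as 1/s up to logarithmic factors. -/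
open Real Set

theorem div_one_add_mul_exp_eq_iff {s A k y t : ℝ} (hA : 0 < A) (hk : k ≠ 0)
    (hy : y ∈ Ioo 0 s) :
    s / (1 + A * exp (-(k * t))) = y ↔ t = 1 / k * log (A * y / (s - y)) := by
  obtain ⟨hy0, hys⟩ := hy
  have hden : 0 < 1 + A * exp (-(k * t)) := by positivity
  have hAy : 0 < A * y := mul_pos hA hy0
  calc s / (1 + A * exp (-(k * t))) = y
      ↔ exp (-(k * t)) = (s - y) / (A * y) := by
        rw [div_eq_iff hden.ne', eq_div_iff hAy.ne']
        constructor <;> intro h <;> linarith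
    _ ↔ -(k * t) = log ((s - y) / (A * y)) := by
        rw [← exp_eq_exp (x := -(k * t)), exp_log (div_pos (sub_pos.2 hys) hAy)]
    _ ↔ t = 1 / k * log (A * y / (s - y)) := by
        rw [← inv_div, log_inv, neg_inj]
        field_simp

/-- The odds `y/(s - y)` of a level `y` above `σ₀` exceed the initial odds `σ₀/(s - σ₀)`. -/
theorem one_lt_sub_one_mul_div {s σ₀ y : ℝ} (hσ₀ : 0 < σ₀) (hσ₀y : σ₀ < y) (hys : y < s) :
    1 < (s / σ₀ - 1) * y / (s - y) := by
  have hsy : 0 < s - y := sub_pos.2 hys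
  have hsplit : (s / σ₀ - 1) * y / (s - y) = y / σ₀ * ((s - σ₀) / (s - y)) := by
    field_simp
  rw [hsplit]
  exact one_lt_mul_of_lt_of_le ((one_lt_div hσ₀).2 hσ₀y) ((one_le_div hsy).2 (by linarith))

/-- For the logistic solution `σ(t) = s/(1 + (s/σ₀ − 1)e^{−2st})` with `0 < σ₀ < s`
and any `ε ∈ (0, s − σ₀)`, the unique time `t ≥ 0` at which `σ(t) = s − ε` is
`t_ε = (1/(2s))·ln((s/σ₀ − 1)(s − ε)/ε)`. -/
theorem logistic_hitting_time (s σ₀ ε : ℝ) (hs : 0 < s) (h0 : σ₀ ∈ Set.Ioo 0 s)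
    (hε : ε ∈ Set.Ioo 0 (s - σ₀)) (σ : ℝ → ℝ)
    (hσ : ∀ t, σ t = s / (1 + (s / σ₀ - 1) * Real.exp (-2 * s * t))) :
    0 ≤ (1 / (2 * s)) * Real.log ((s / σ₀ - 1) * (s - ε) / ε) ∧
    σ ((1 / (2 * s)) * Real.log ((s / σ₀ - 1) * (s - ε) / ε)) = s - ε ∧
    ∀ t : ℝ, σ t = s - ε → t = (1 / (2 * s)) * Real.log ((s / σ₀ - 1) * (s - ε) / ε) := by
  obtain ⟨hσ₀, hσ₀s⟩ := h0
  obtain ⟨hε, hεs⟩ := hε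
  have hy : s - ε ∈ Ioo 0 s := ⟨by linarith, by linarith⟩
  have hA : 0 < s / σ₀ - 1 := sub_pos.2 ((one_lt_div hσ₀).2 hσ₀s)
  have hitting : ∀ t, σ t = s - ε ↔ t = 1 / (2 * s) * log ((s / σ₀ - 1) * (s - ε) / ε) := by
    intro t
    rw [hσ, neg_mul, neg_mul, div_one_add_mul_exp_eq_iff hA (by positivity) hy, sub_sub_cancel]
  refine ⟨?_, (hitting _).2 rfl, fun t => (hitting t).1⟩
  have hodds := one_lt_sub_one_mul_div hσ₀ (by linarith : σ₀ < s - ε) hy.2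
  rw [sub_sub_cancel] at hodds
  exact mul_nonneg (by positivity) (log_nonneg hodds.le)
end

section
/- Under gradient flow U'(t) = −Vᵀ(VU − Σ), V'(t) = −(VU − Σ)Uᵀ, the balance quantity B(t) = V(t)ᵀV(t) − U(t)U(t)ᵀ is conserved: d/dt B(t) = 0 for all t. In particular, if VᵀV = UUᵀ at initialization, this holds throughout training. -/
open Matrix

/-!
Along the flow `U' = −VᵀE`, `V' = −EUᵀ` with `E = VU − Σ`, the product rule gives
`(VᵀV)' = −UEᵀV − VᵀEUᵀ = (UUᵀ)'`, so `VᵀV − UUᵀ` has zero derivative and is constant.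
-/

section EntrywiseDerivative

variable {𝕜 : Type*} [NontriviallyNormedField 𝕜] {l m n : Type*}

theorem hasDerivAt_matrix_mul_apply [Fintype m] {A : 𝕜 → Matrix l m 𝕜} {B : 𝕜 → Matrix m n 𝕜}
    {A' : Matrix l m 𝕜} {B' : Matrix m n 𝕜} {x : 𝕜}
    (hA : ∀ i k, HasDerivAt (fun t => A t i k) (A' i k) x)
    (hB : ∀ k j, HasDerivAt (fun t => B t k j) (B' k j) x) (i : l) (j : n) :
    HasDerivAt (fun t => (A t * B t) i j) ((A' * B x + A x * B') i j) x := by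
  rw [Matrix.add_apply, mul_apply, mul_apply, ← Finset.sum_add_distrib]
  exact HasDerivAt.fun_sum fun k _ => (hA i k).mul (hB k j)

theorem hasDerivAt_transpose_mul_self_sub_mul_transpose_apply [Fintype l] [Fintype n]
    {U : 𝕜 → Matrix m n 𝕜} {V : 𝕜 → Matrix l m 𝕜}
    {U' : Matrix m n 𝕜} {V' : Matrix l m 𝕜} {x : 𝕜}
    (hU : ∀ i j, HasDerivAt (fun t => U t i j) (U' i j) x)
    (hV : ∀ i j, HasDerivAt (fun t => V t i j) (V' i j) x) (i j : m) :
    HasDerivAt (fun t => ((V t)ᵀ * V t - U t * (U t)ᵀ) i j)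
      ((V'ᵀ * V x + (V x)ᵀ * V' - (U' * (U x)ᵀ + U x * U'ᵀ)) i j) x := by
  rw [Matrix.sub_apply]
  exact (hasDerivAt_matrix_mul_apply (fun i k => hV k i) hV i j).sub
    (hasDerivAt_matrix_mul_apply hU (fun k j => hU j k) i j)

end EntrywiseDerivative

theorem gradient_flow_balance_tangent_eq_zero {R : Type*} [CommRing R] {l m n : Type*}
    [Fintype l] [Fintype m] [Fintype n]
    (U : Matrix m n R) (V : Matrix l m R) (E : Matrix l n R) :
    (-(E * Uᵀ))ᵀ * V + Vᵀ * (-(E * Uᵀ)) - (-(Vᵀ * E) * Uᵀ + U * (-(Vᵀ * E))ᵀ) = 0 := by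
  simp only [transpose_neg, transpose_mul, transpose_transpose, Matrix.neg_mul, Matrix.mul_neg,
    Matrix.mul_assoc]
  abel

theorem eq_of_forall_hasDerivAt_apply_zero {m n : Type*} {f : ℝ → Matrix m n ℝ}
    (hf : ∀ t i j, HasDerivAt (fun t => f t i j) 0 t) (s t : ℝ) : f s = f t := by
  ext i j
  exact is_const_of_deriv_eq_zero (fun r => (hf r i j).differentiableAt)
    (fun r => (hf r i j).deriv) s t

/-- Under the gradient flow `U' = −Vᵀ(VU − Σ)`, `V' = −(VU − Σ)Uᵀ` (stated
entrywise), the balance quantity `B(t) = V(t)ᵀV(t) − U(t)U(t)ᵀ` has zero time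
derivative in every entry; in particular if `VᵀV = UUᵀ` at `t = 0` then it holds
for all `t`. -/
theorem balance_conserved_under_gradient_flow (H di dout : ℕ)
    (Sig : Matrix (Fin dout) (Fin di) ℝ)
    (U : ℝ → Matrix (Fin H) (Fin di) ℝ) (V : ℝ → Matrix (Fin dout) (Fin H) ℝ)
    (hU : ∀ t (i : Fin H) (j : Fin di),
      HasDerivAt (fun t => U t i j) ((-((V t)ᵀ * (V t * U t - Sig))) i j) t)
    (hV : ∀ t (i : Fin dout) (j : Fin H),
      HasDerivAt (fun t => V t i j) ((-((V t * U t - Sig) * (U t)ᵀ)) i j) t) :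
    (∀ t (i j : Fin H),
      HasDerivAt (fun t => ((V t)ᵀ * V t - U t * (U t)ᵀ) i j) 0 t) ∧
    ((V 0)ᵀ * V 0 = U 0 * (U 0)ᵀ → ∀ t, (V t)ᵀ * V t = U t * (U t)ᵀ) := by
  have hderiv : ∀ t (i j : Fin H),
      HasDerivAt (fun t => ((V t)ᵀ * V t - U t * (U t)ᵀ) i j) 0 t := fun t i j => by
    simpa only [gradient_flow_balance_tangent_eq_zero, Matrix.zero_apply] using
      hasDerivAt_transpose_mul_self_sub_mul_transpose_apply (hU t) (hV t) i j
  refine ⟨hderiv, fun h0 t => ?_⟩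
  rw [← sub_eq_zero, eq_of_forall_hasDerivAt_apply_zero hderiv t 0, h0, sub_self]
end

section
/- If U, V evolve under the gradient flow U' = −Vᵀ(VU − Σ), V' = −(VU − Σ)Uᵀ and satisfy the balanced condition V(t)ᵀV(t) = U(t)U(t)ᵀ for all t, then the product W = VU evolves as W' = −(W − Σ)(WᵀW)^{1/2} − (WWᵀ)^{1/2}(W − Σ), where M^{1/2} denotes the positive semidefinite square root. -/
open Matrix

/-- The positive semidefinite square root of a positive semidefinite matrix, as it was defined
in Mathlib (Dec 2024); the definition has since been removed from Mathlib. -/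
noncomputable def Matrix.PosSemidef.sqrt {n 𝕜 : Type*} [Fintype n] [DecidableEq n] [RCLike 𝕜]
    [PartialOrder 𝕜]    {A : Matrix n n 𝕜} (hA : A.PosSemidef) : Matrix n n 𝕜 :=
  hA.1.eigenvectorUnitary.1 * diagonal ((↑) ∘ (√·) ∘ hA.1.eigenvalues) *
    (star hA.1.eigenvectorUnitary : Matrix n n 𝕜)

/-!
Balancedness `VᵀV = UUᵀ` gives `WᵀW = (UᵀU)²` and `WWᵀ = (VVᵀ)²` for `W = VU`, so by uniqueness
of positive semidefinite square roots `(WᵀW)^{1/2} = UᵀU` and `(WWᵀ)^{1/2} = VVᵀ`. The product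
rule `W' = V'U + VU'` together with the flow equations is then exactly the claimed equation.
-/

namespace Matrix

open scoped MatrixOrder ComplexOrder in
theorem PosSemidef.sqrt_eq_of_sq_eq {n 𝕜 : Type*} [Fintype n] [DecidableEq n] [RCLike 𝕜]
    {A B : Matrix n n 𝕜} (hA : A.PosSemidef) (hB : B.PosSemidef) (h : B ^ 2 = A) :
    hA.sqrt = B := by
  have hcfc : hA.sqrt = cfc Real.sqrt A := by
    rw [hA.1.cfc_eq, IsHermitian.cfc, PosSemidef.sqrt]
    simp [Unitary.conjStarAlgAut_apply]
  rw [hcfc, ← cfcₙ_eq_cfc (hf0 := Real.sqrt_zero), ← CFC.sqrt_eq_real_sqrt A hA.nonneg]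
  exact CFC.sqrt_unique (by rwa [← sq]) hB.nonneg

section Balanced

variable {l m n R : Type*} [Fintype l] [Fintype m] [Fintype n] [CommSemiring R]
  {U : Matrix m n R} {V : Matrix l m R}

theorem transpose_mul_self_eq_sq_of_balanced [DecidableEq n] (h : Vᵀ * V = U * Uᵀ) :
    (V * U)ᵀ * (V * U) = (Uᵀ * U) ^ 2 := by
  rw [transpose_mul, sq, Matrix.mul_assoc, ← Matrix.mul_assoc Vᵀ, h]
  simp only [Matrix.mul_assoc]

theorem mul_transpose_self_eq_sq_of_balanced [DecidableEq l] (h : Vᵀ * V = U * Uᵀ) :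
    (V * U) * (V * U)ᵀ = (V * Vᵀ) ^ 2 := by
  rw [transpose_mul, sq, Matrix.mul_assoc, ← Matrix.mul_assoc U, ← h]
  simp only [Matrix.mul_assoc]

end Balanced

theorem hasDerivAt_mul_apply {𝕜 : Type*} [NontriviallyNormedField 𝕜] {l m n : Type*} [Fintype m]
    {A : 𝕜 → Matrix l m 𝕜} {B : 𝕜 → Matrix m n 𝕜} {A' : Matrix l m 𝕜} {B' : Matrix m n 𝕜}
    {x : 𝕜} (hA : ∀ i j, HasDerivAt (fun t => A t i j) (A' i j) x)
    (hB : ∀ i j, HasDerivAt (fun t => B t i j) (B' i j) x) (i : l) (j : n) :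
    HasDerivAt (fun t => (A t * B t) i j) ((A' * B x + A x * B') i j) x := by
  simp only [mul_apply, add_apply, ← Finset.sum_add_distrib]
  exact HasDerivAt.fun_sum fun k _ => (hA i k).mul (hB k j)

end Matrix

/-- Under the balanced gradient flow `U' = −Vᵀ(VU − Σ)`, `V' = −(VU − Σ)Uᵀ` with
`V(t)ᵀV(t) = U(t)U(t)ᵀ` for all `t`, the product `W = VU` evolves (entrywise) as
`W' = −(W − Σ)(WᵀW)^{1/2} − (WWᵀ)^{1/2}(W − Σ)`, with the positive semidefinite
square root. -/
theorem product_dynamics_under_balanced_flow (H di dout : ℕ)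
    (Sig : Matrix (Fin dout) (Fin di) ℝ)
    (U : ℝ → Matrix (Fin H) (Fin di) ℝ) (V : ℝ → Matrix (Fin dout) (Fin H) ℝ)
    (hU : ∀ t (i : Fin H) (j : Fin di),
      HasDerivAt (fun t => U t i j) ((-((V t)ᵀ * (V t * U t - Sig))) i j) t)
    (hV : ∀ t (i : Fin dout) (j : Fin H),
      HasDerivAt (fun t => V t i j) ((-((V t * U t - Sig) * (U t)ᵀ)) i j) t)
    (hbal : ∀ t, (V t)ᵀ * V t = U t * (U t)ᵀ)
    (hps1 : ∀ t, ((V t * U t)ᵀ * (V t * U t)).PosSemidef)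
    (hps2 : ∀ t, ((V t * U t) * (V t * U t)ᵀ).PosSemidef) :
    ∀ t (i : Fin dout) (j : Fin di),
      HasDerivAt (fun t => (V t * U t) i j)
        ((-(V t * U t - Sig) * (hps1 t).sqrt - (hps2 t).sqrt * (V t * U t - Sig)) i j) t := by
  intro t i j
  have hsqrt₁ : (hps1 t).sqrt = (U t)ᵀ * U t :=
    (hps1 t).sqrt_eq_of_sq_eq (by simpa using posSemidef_conjTranspose_mul_self (U t))
      (transpose_mul_self_eq_sq_of_balanced (hbal t)).symm
  have hsqrt₂ : (hps2 t).sqrt = V t * (V t)ᵀ :=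
    (hps2 t).sqrt_eq_of_sq_eq (by simpa using posSemidef_self_mul_conjTranspose (V t))
      (mul_transpose_self_eq_sq_of_balanced (hbal t)).symm
  have hflow : -(V t * U t - Sig) * ((U t)ᵀ * U t) - V t * (V t)ᵀ * (V t * U t - Sig) =
      -((V t * U t - Sig) * (U t)ᵀ) * U t + V t * -((V t)ᵀ * (V t * U t - Sig)) := by
    simp only [Matrix.neg_mul, Matrix.mul_neg, Matrix.mul_assoc]
    abel
  rw [hsqrt₁, hsqrt₂, hflow]
  exact hasDerivAt_mul_apply (hV t) (hU t) i j
end
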